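/- arXiv:2011.11800 — 7 statements merged into one kernel-verified Lean document; each statement's English description precedes it below -/
import Mathlib

section
/- Let M be an n × n Hermitian tridiagonal matrix and let c₁, …, cₙ and d₁, …, dₙ be nonnegative real numbers such that M_{i,i} ≥ cᵢ² + dᵢ² for all i and |M_{i,i+1}| ≤ dᵢ c_{i+1} for 1 ≤ i < n. Then M is positive semidefinite. -/
/-!
Each off-diagonal term of the quadratic form is split by AM-GM with weights whose product
dominates its square: `2 |xᵢ| |Mᵢⱼ| |xⱼ| ≤ pᵢⱼ |xᵢ|² + pⱼᵢ |xⱼ|²` whenever `|Mᵢⱼ|² ≤ pᵢⱼ pⱼᵢ`.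
So a Hermitian matrix is positive semidefinite as soon as every diagonal entry `Mᵢᵢ` pays for
the weights `∑ⱼ pᵢⱼ` of its row. For a tridiagonal matrix the edge `(i, i+1)` gets the weights
`dᵢ²` and `cᵢ₊₁²`, so row `i` has to pay at most `cᵢ² + dᵢ²`.
-/

open scoped ComplexOrder
open Finset

theorem two_mul_mul_le_of_sq_le_mul {a b m p q : ℝ} (hp : 0 ≤ p) (hq : 0 ≤ q)
    (h : m ^ 2 ≤ p * q) : 2 * (a * m * b) ≤ p * a ^ 2 + q * b ^ 2 := by
  have hsq : (2 * (a * m * b)) ^ 2 ≤ (p * a ^ 2 + q * b ^ 2) ^ 2 := by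
    nlinarith [sq_nonneg (p * a ^ 2 - q * b ^ 2), mul_le_mul_of_nonneg_left h (sq_nonneg (a * b))]
  exact (abs_le_of_sq_le_sq' hsq (by positivity)).2

theorem Finset.sum_sum_erase_comm {ι M : Type*} [Fintype ι] [DecidableEq ι] [AddCommMonoid M]
    (f : ι → ι → M) : ∑ i, ∑ j ∈ univ.erase i, f i j = ∑ i, ∑ j ∈ univ.erase i, f j i :=
  sum_comm' fun i j => by simp [ne_comm]

theorem Finset.sum_ite_le_of_subsingleton {ι M : Type*} [Fintype ι] [AddCommMonoid M]
    [PartialOrder M] [IsOrderedAddMonoid M] {P : ι → Prop} [DecidablePred P]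
    (hP : {j | P j}.Subsingleton) {a : M} (ha : 0 ≤ a) :
    ∑ j, (if P j then a else 0) ≤ a := by
  rw [sum_ite, sum_const_zero, add_zero, sum_const]
  have hcard : #{j | P j} ≤ 1 :=
    card_le_one.mpr fun x hx y hy => hP (by simpa using hx) (by simpa using hy)
  simpa using nsmul_le_nsmul_left ha hcard

namespace Matrix

variable {ι 𝕜 : Type*} [Fintype ι] [DecidableEq ι] [RCLike 𝕜]

theorem IsHermitian.posSemidef_of_norm_sq_le_mul {M : Matrix ι ι 𝕜} (hM : M.IsHermitian)
    {p : ι → ι → ℝ} (hp : ∀ i j, 0 ≤ p i j)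
    (hoff : ∀ i j, i ≠ j → ‖M i j‖ ^ 2 ≤ p i j * p j i)
    (hdiag : ∀ i, ∑ j ∈ univ.erase i, p i j ≤ RCLike.re (M i i)) : M.PosSemidef := by
  refine PosSemidef.of_dotProduct_mulVec_nonneg hM fun x =>
    RCLike.nonneg_iff.mpr ⟨?_, hM.im_star_dotProduct_mulVec_self x⟩
  have hdiag_term (i : ι) :
      RCLike.re (star (x i) * (M i i * x i)) = RCLike.re (M i i) * ‖x i‖ ^ 2 := by
    rw [← hM.coe_re_apply_self i, mul_left_comm, RCLike.star_def, RCLike.conj_mul]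
    simp
  have hoff_term (i j : ι) (hij : i ≠ j) :
      -((p i j * ‖x i‖ ^ 2 + p j i * ‖x j‖ ^ 2) / 2) ≤
        RCLike.re (star (x i) * (M i j * x j)) := by
    have hamgm := two_mul_mul_le_of_sq_le_mul (a := ‖x i‖) (b := ‖x j‖) (hp i j) (hp j i)
      (hoff i j hij)
    have hre := neg_abs_le (RCLike.re (star (x i) * (M i j * x j)))
    have hnorm := RCLike.abs_re_le_norm (star (x i) * (M i j * x j))
    simp only [norm_mul, norm_star] at hnorm
    linarith
  have hswap : ∑ i, ∑ j ∈ univ.erase i, (p i j * ‖x i‖ ^ 2 + p j i * ‖x j‖ ^ 2) / 2 =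
      ∑ i, (∑ j ∈ univ.erase i, p i j) * ‖x i‖ ^ 2 := by
    simp only [add_div, sum_add_distrib]
    rw [sum_sum_erase_comm (fun i j => p j i * ‖x j‖ ^ 2 / 2)]
    simp only [← sum_add_distrib, add_halves, sum_mul]
  calc 0 ≤ ∑ i, (RCLike.re (M i i) - ∑ j ∈ univ.erase i, p i j) * ‖x i‖ ^ 2 :=
        sum_nonneg fun i _ => mul_nonneg (sub_nonneg.mpr (hdiag i)) (sq_nonneg _)
    _ = ∑ i, (RCLike.re (M i i) * ‖x i‖ ^ 2 +
          ∑ j ∈ univ.erase i, -((p i j * ‖x i‖ ^ 2 + p j i * ‖x j‖ ^ 2) / 2)) := by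
        simp only [sum_neg_distrib, ← sub_eq_add_neg, sum_sub_distrib, hswap, sub_mul]
    _ ≤ ∑ i, (RCLike.re (star (x i) * (M i i * x i)) +
          ∑ j ∈ univ.erase i, RCLike.re (star (x i) * (M i j * x j))) := by
        gcongr with i _ j hj
        · rw [hdiag_term]
        · exact hoff_term i j (ne_of_mem_erase hj).symm
    _ = RCLike.re (star x ⬝ᵥ (M *ᵥ x)) := by
        simp only [dotProduct, mulVec, Pi.star_apply, mul_sum, map_sum]
        exact sum_congr rfl fun i _ =>
          add_sum_erase _ (fun j => RCLike.re (star (x i) * (M i j * x j))) (mem_univ i)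

end Matrix

def tridiagWeight {n : ℕ} (c d : Fin n → ℝ) (i j : Fin n) : ℝ :=
  (if (j : ℕ) = i + 1 then d i ^ 2 else 0) + (if (i : ℕ) = j + 1 then c i ^ 2 else 0)

theorem tridiagWeight_nonneg {n : ℕ} (c d : Fin n → ℝ) (i j : Fin n) :
    0 ≤ tridiagWeight c d i j := by
  unfold tridiagWeight; positivity

theorem tridiagWeight_of_eq_succ {n : ℕ} (c d : Fin n → ℝ) {i j : Fin n} (h : (j : ℕ) = i + 1) :
    tridiagWeight c d i j = d i ^ 2 := by
  have h' : (i : ℕ) ≠ j + 1 := by omega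
  rw [tridiagWeight, if_pos h, if_neg h', add_zero]

theorem tridiagWeight_of_succ_eq {n : ℕ} (c d : Fin n → ℝ) {i j : Fin n} (h : (i : ℕ) = j + 1) :
    tridiagWeight c d i j = c i ^ 2 := by
  have h' : (j : ℕ) ≠ i + 1 := by omega
  rw [tridiagWeight, if_neg h', if_pos h, zero_add]

theorem sum_tridiagWeight_le {n : ℕ} (c d : Fin n → ℝ) (i : Fin n) :
    ∑ j, tridiagWeight c d i j ≤ c i ^ 2 + d i ^ 2 := by
  have hsucc := sum_ite_le_of_subsingleton (P := fun j : Fin n => (j : ℕ) = i + 1)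
    (fun j hj k hk => Fin.ext (hj.trans hk.symm)) (sq_nonneg (d i))
  have hpred := sum_ite_le_of_subsingleton (P := fun j : Fin n => (i : ℕ) = j + 1)
    (fun j hj k hk => Fin.ext (by simp only [Set.mem_ofPred_eq] at hj hk; omega)) (sq_nonneg (c i))
  simp only [tridiagWeight, sum_add_distrib]
  linarith

theorem stmt_2_general {n : ℕ} (M : Matrix (Fin n) (Fin n) ℂ) (hM : M.IsHermitian)
    (c d : Fin n → ℝ)
    (htri : ∀ i j : Fin n, 1 < |(i : ℤ) - (j : ℤ)| → M i j = 0)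
    (hdiag : ∀ i : Fin n, (c i) ^ 2 + (d i) ^ 2 ≤ (M i i).re)
    (hoff : ∀ i j : Fin n, (j : ℕ) = (i : ℕ) + 1 → ‖M i j‖ ≤ d i * c j) :
    M.PosSemidef := by
  have hsq {i j : Fin n} (h : (j : ℕ) = i + 1) : ‖M i j‖ ^ 2 ≤ d i ^ 2 * c j ^ 2 := by
    rw [← mul_pow]; exact pow_le_pow_left₀ (norm_nonneg _) (hoff i j h) 2
  refine hM.posSemidef_of_norm_sq_le_mul (tridiagWeight_nonneg c d) (fun i j hij => ?_)
    fun i => ?_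
  · have hcases : (j : ℕ) = i + 1 ∨ (i : ℕ) = j + 1 ∨ 1 < |(i : ℤ) - j| := by
      have := Fin.val_ne_of_ne hij
      rw [lt_abs]; omega
    rcases hcases with hsucc | hpred | hfar
    · rw [tridiagWeight_of_eq_succ c d hsucc, tridiagWeight_of_succ_eq c d hsucc]
      exact hsq hsucc
    · rw [tridiagWeight_of_succ_eq c d hpred, tridiagWeight_of_eq_succ c d hpred,
        ← hM.apply i j, norm_star, mul_comm]
      exact hsq hpred
    · rw [htri i j hfar, norm_zero, zero_pow two_ne_zero]
      exact mul_nonneg (tridiagWeight_nonneg c d i j) (tridiagWeight_nonneg c d j i)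
  · calc ∑ j ∈ univ.erase i, tridiagWeight c d i j ≤ ∑ j, tridiagWeight c d i j :=
          sum_le_sum_of_subset_of_nonneg (erase_subset _ _) fun j _ _ =>
            tridiagWeight_nonneg c d i j
      _ ≤ (M i i).re := (sum_tridiagWeight_le c d i).trans (hdiag i)

/-- **Positivity of a dominated Hermitian tridiagonal matrix.**
If `M` is an `n × n` Hermitian tridiagonal matrix with `M i i ≥ cᵢ² + dᵢ²` and
`|M i (i+1)| ≤ dᵢ * c_(i+1)` for nonnegative reals `cᵢ, dᵢ`, then `M` is positive
semidefinite. -/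
theorem stmt_2 {n : ℕ} (M : Matrix (Fin n) (Fin n) ℂ) (hM : M.IsHermitian)
    (c d : Fin n → ℝ) (hc : ∀ i, 0 ≤ c i) (hd : ∀ i, 0 ≤ d i)
    (htri : ∀ i j : Fin n, 1 < |(i : ℤ) - (j : ℤ)| → M i j = 0)
    (hdiag : ∀ i : Fin n, (c i) ^ 2 + (d i) ^ 2 ≤ (M i i).re)
    (hoff : ∀ i j : Fin n, (j : ℕ) = (i : ℕ) + 1 → ‖M i j‖ ≤ d i * c j) :
    M.PosSemidef :=
  stmt_2_general M hM c d htri hdiag hoff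
end

section
/- Let T = (T_{i,j}) be a matrix and let a₁, …, aₘ and b₁, …, bₙ be real numbers with aᵢ - bⱼ ≥ d > 0 for all i, j. Then the Schur (entrywise) product matrix with entries T_{i,j}/(aᵢ - bⱼ) has operator norm at most (1/d)·‖T‖. -/
/-!
Since `1 / (aᵢ - bⱼ) = ∫₀^∞ e^{-t aᵢ} e^{t bⱼ} dt`, the Schur product is the integral over `t > 0`
of `diag(e^{-t a}) * T * diag(e^{t b})`. Picking `c` with `bⱼ + d ≤ c ≤ aᵢ`, the two diagonal
factors have operator norms at most `e^{-tc}` and `e^{t(c - d)}`, so the integrand has norm at most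
`e^{-td} ‖T‖`, whose integral is `‖T‖ / d`.
-/

open MeasureTheory Set Matrix
open scoped Matrix.Norms.L2Operator

/-- The ℓ²→ℓ² operator norm of a rectangular complex matrix. -/
noncomputable def opNormRect {m n : ℕ} (A : Matrix (Fin m) (Fin n) ℂ) : ℝ :=
  ‖LinearMap.toContinuousLinearMap (Matrix.toEuclideanLin A)‖

lemma opNormRect_eq_l2_opNorm {m n : ℕ} (A : Matrix (Fin m) (Fin n) ℂ) :
    opNormRect A = ‖A‖ :=
  rfl

lemma exists_forall_le_and_forall_add_le {ι κ : Type*} [Finite ι] [Finite κ]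
    {a : ι → ℝ} {b : κ → ℝ} {d : ℝ} (h : ∀ i j, d ≤ a i - b j) :
    ∃ c, (∀ i, c ≤ a i) ∧ ∀ j, b j + d ≤ c := by
  rcases isEmpty_or_nonempty ι with hι | hι
  · obtain ⟨c, hc⟩ := Finite.bddAbove_range (fun j => b j + d)
    exact ⟨c, isEmptyElim, fun j => hc ⟨j, rfl⟩⟩
  · refine ⟨⨅ i, a i, fun i => ciInf_le (Finite.bddBelow_range a) i, fun j => le_ciInf ?_⟩
    intro i
    linarith [h i j]

theorem integral_exp_neg_mul_Ioi_zero {r : ℝ} (hr : 0 < r) :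
    ∫ t in Ioi 0, Real.exp (-r * t) = r⁻¹ := by
  simpa [neg_div, div_neg] using integral_exp_mul_Ioi (neg_lt_zero.mpr hr) 0

theorem integral_cexp_neg_mul_Ioi_zero {r : ℝ} (hr : 0 < r) :
    ∫ t : ℝ in Ioi 0, Complex.exp (-r * t) = (r : ℂ)⁻¹ := by
  simpa [neg_div, div_neg] using integral_exp_mul_complex_Ioi (a := -r) (by simpa using hr) 0

lemma Matrix.l2_opNorm_diagonal_le {𝕜 : Type*} [RCLike 𝕜] {n : Type*} [Fintype n] [DecidableEq n]
    {v : n → 𝕜} {r : ℝ} (hr : 0 ≤ r) (h : ∀ i, ‖v i‖ ≤ r) :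
    ‖diagonal v‖ ≤ r := by
  rw [l2_opNorm_diagonal]
  exact (pi_norm_le_iff_of_nonneg hr).mpr h

open Complex in
noncomputable def schurCauchyIntegrand {m n : Type*} [Fintype m] [Fintype n] [DecidableEq m]
    [DecidableEq n] (T : Matrix m n ℂ) (a : m → ℝ) (b : n → ℝ) (t : ℝ) : Matrix m n ℂ :=
  diagonal (fun i => exp (-t * a i)) * T * diagonal (fun j => exp (t * b j))

section schurCauchyIntegrand

variable {m n : Type*} [Fintype m] [Fintype n] [DecidableEq m] [DecidableEq n]
  (T : Matrix m n ℂ) {a : m → ℝ} {b : n → ℝ}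

lemma schurCauchyIntegrand_apply (t : ℝ) (i : m) (j : n) :
    schurCauchyIntegrand T a b t i j = T i j * Complex.exp (-((a i - b j : ℝ) : ℂ) * t) := by
  rw [schurCauchyIntegrand, mul_diagonal, diagonal_mul, mul_right_comm, ← Complex.exp_add]
  push_cast
  ring_nf

lemma continuous_schurCauchyIntegrand : Continuous (schurCauchyIntegrand T a b) := by
  unfold schurCauchyIntegrand
  fun_prop

lemma norm_schurCauchyIntegrand_le {d : ℝ} (hsep : ∀ i j, d ≤ a i - b j) {t : ℝ} (ht : 0 ≤ t) :
    ‖schurCauchyIntegrand T a b t‖ ≤ Real.exp (-d * t) * ‖T‖ := by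
  obtain ⟨c, hca, hbc⟩ := exists_forall_le_and_forall_add_le hsep
  have hleft : ‖diagonal (fun i => Complex.exp (-t * a i))‖ ≤ Real.exp (-t * c) :=
    l2_opNorm_diagonal_le (Real.exp_pos _).le fun i => by
      simpa [Complex.norm_exp] using mul_le_mul_of_nonneg_left (hca i) ht
  have hright : ‖diagonal (fun j => Complex.exp (t * b j))‖ ≤ Real.exp (t * (c - d)) :=
    l2_opNorm_diagonal_le (Real.exp_pos _).le fun j => by
      simpa [Complex.norm_exp] using mul_le_mul_of_nonneg_left (by linarith [hbc j]) ht
  calc ‖schurCauchyIntegrand T a b t‖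
      ≤ ‖diagonal (fun i => Complex.exp (-t * a i))‖ * ‖T‖ *
          ‖diagonal (fun j => Complex.exp (t * b j))‖ :=
        (l2_opNorm_mul _ _).trans (mul_le_mul_of_nonneg_right (l2_opNorm_mul _ _) (norm_nonneg _))
    _ ≤ Real.exp (-t * c) * ‖T‖ * Real.exp (t * (c - d)) := by gcongr
    _ = Real.exp (-d * t) * ‖T‖ := by
        rw [mul_right_comm, ← Real.exp_add]
        ring_nf

lemma ae_norm_schurCauchyIntegrand_le {d : ℝ} (hsep : ∀ i j, d ≤ a i - b j) :
    ∀ᵐ t ∂volume.restrict (Ioi 0), ‖schurCauchyIntegrand T a b t‖ ≤ Real.exp (-d * t) * ‖T‖ := by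
  filter_upwards [ae_restrict_mem measurableSet_Ioi] with t ht
  exact norm_schurCauchyIntegrand_le T hsep ht.le

lemma integrableOn_schurCauchyIntegrand {d : ℝ} (hd : 0 < d) (hsep : ∀ i j, d ≤ a i - b j) :
    IntegrableOn (schurCauchyIntegrand T a b) (Ioi 0) :=
  ((exp_neg_integrableOn_Ioi 0 hd).mul_const ‖T‖).mono'
    (continuous_schurCauchyIntegrand T).aestronglyMeasurable
    (ae_norm_schurCauchyIntegrand_le T hsep)

lemma integral_schurCauchyIntegrand {d : ℝ} (hd : 0 < d) (hsep : ∀ i j, d ≤ a i - b j) :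
    ∫ t in Ioi 0, schurCauchyIntegrand T a b t = of fun i j => T i j / (a i - b j) := by
  ext i j
  let entry := LinearMap.toContinuousLinearMap (entryLinearMap ℂ ℂ i j : Matrix m n ℂ →ₗ[ℂ] ℂ)
  have hr : 0 < a i - b j := hd.trans_le (hsep i j)
  change entry _ = _
  rw [← entry.integral_comp_comm (integrableOn_schurCauchyIntegrand T hd hsep)]
  simp only [entry, LinearMap.coe_toContinuousLinearMap', entryLinearMap_apply,
    schurCauchyIntegrand_apply, integral_const_mul, integral_cexp_neg_mul_Ioi_zero hr, of_apply,
    div_eq_mul_inv]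
  push_cast
  rfl

end schurCauchyIntegrand

/-- **Pearcy–Shields Schur multiplier bound.**
If `T` is an `m × n` complex matrix and `a i - b j ≥ d > 0` for all `i, j`, then the
entrywise (Schur) product matrix `(T i j / (a i - b j))` has operator norm at most
`(1/d) * ‖T‖`. -/
theorem stmt_3 {m n : ℕ} (T : Matrix (Fin m) (Fin n) ℂ)
    (a : Fin m → ℝ) (b : Fin n → ℝ) (d : ℝ) (hd : 0 < d)
    (hsep : ∀ (i : Fin m) (j : Fin n), d ≤ a i - b j) :
    opNormRect (Matrix.of fun i j => (T i j) / ((a i : ℂ) - (b j : ℂ))) ≤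
      (1 / d) * opNormRect T := by
  rw [opNormRect_eq_l2_opNorm, opNormRect_eq_l2_opNorm, ← integral_schurCauchyIntegrand T hd hsep]
  calc ‖∫ t in Ioi 0, schurCauchyIntegrand T a b t‖
      ≤ ∫ t in Ioi 0, Real.exp (-d * t) * ‖T‖ :=
        norm_integral_le_of_norm_le ((exp_neg_integrableOn_Ioi 0 hd).mul_const _)
          (ae_norm_schurCauchyIntegrand_le T hsep)
    _ = 1 / d * ‖T‖ := by rw [integral_mul_const, integral_exp_neg_mul_Ioi_zero hd, one_div]
end

section
/- Let P and Q be orthogonal projections on a finite-dimensional complex Hilbert space. Then there exists an orthonormal basis {pᵢ} of the range of P such that ⟨pᵢ, Q pⱼ⟩ = 0 whenever i ≠ j. -/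
/-! The compression `x ↦ proj_K (T x)` of a symmetric operator `T` to a finite-dimensional
subspace `K` is again symmetric, so by the spectral theorem `K` has an orthonormal eigenbasis
`{pᵢ}` for it. Since `T pⱼ` and its projection `λⱼ pⱼ` have the same inner product with
`pᵢ ∈ K`, we get `⟪pᵢ, T pⱼ⟫ = λⱼ ⟪pᵢ, pⱼ⟫ = 0` for `i ≠ j`. -/

open Submodule

namespace LinearMap.IsSymmetric

variable {𝕜 E : Type*} [RCLike 𝕜] [NormedAddCommGroup E] [InnerProductSpace 𝕜 E]
  {T : E →ₗ[𝕜] E}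

theorem compression (hT : T.IsSymmetric) (K : Submodule 𝕜 E) [K.HasOrthogonalProjection] :
    ((K.orthogonalProjectionOnto : E →ₗ[𝕜] K) ∘ₗ T ∘ₗ K.subtype).IsSymmetric := by
  intro x y
  simp [hT _ _]

theorem exists_orthonormal_span_eq_inner_apply_eq_zero (hT : T.IsSymmetric)
    (K : Submodule 𝕜 E) [FiniteDimensional 𝕜 K] :
    ∃ (d : ℕ) (p : Fin d → E), Orthonormal 𝕜 p ∧ span 𝕜 (Set.range p) = K ∧
      ∀ i j, i ≠ j → inner 𝕜 (p i) (T (p j)) = 0 := by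
  have hS := hT.compression K
  let b := hS.eigenvectorBasis rfl
  refine ⟨_, K.subtype ∘ b, b.orthonormal.comp_linearIsometry K.subtypeₗᵢ, ?_, fun i j hij => ?_⟩
  · rw [Set.range_comp, ← Submodule.map_span, ← b.coe_toBasis, b.toBasis.span_eq,
      Submodule.map_top, K.range_subtype]
  · calc inner 𝕜 ((b i : K) : E) (T (b j))
        = inner 𝕜 (b i) (K.orthogonalProjectionOnto (T (b j))) :=
          (inner_orthogonalProjectionOnto_eq_of_mem_left _ _).symm
      _ = inner 𝕜 (b i) ((hS.eigenvalues rfl j : 𝕜) • b j) :=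
          congrArg _ (hS.apply_eigenvectorBasis rfl j)
      _ = 0 := by rw [inner_smul_right, b.orthonormal.2 hij, mul_zero]

end LinearMap.IsSymmetric

theorem stmt_8_general {H : Type*} [NormedAddCommGroup H] [InnerProductSpace ℂ H]
    [FiniteDimensional ℂ H] (P Q : H →L[ℂ] H)
    (hQ₂ : IsSelfAdjoint Q) :
    ∃ (d : ℕ) (p : Fin d → H),
      Orthonormal ℂ p ∧
      Submodule.span ℂ (Set.range p) = LinearMap.range (P : H →ₗ[ℂ] H) ∧
      (∀ i j : Fin d, i ≠ j → (inner ℂ (p i) (Q (p j)) : ℂ) = 0) :=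
  hQ₂.isSymmetric.exists_orthonormal_span_eq_inner_apply_eq_zero _

/-- **A basis of the range of `P` that `Q` keeps orthogonal.**
If `P` and `Q` are orthogonal projections on a finite-dimensional complex Hilbert space,
then there is an orthonormal basis `{p i}` of the range of `P` such that
`⟨p i, Q (p j)⟩ = 0` whenever `i ≠ j`. -/
theorem stmt_8 {H : Type*} [NormedAddCommGroup H] [InnerProductSpace ℂ H]
    [FiniteDimensional ℂ H] (P Q : H →L[ℂ] H)
    (hP₁ : IsIdempotentElem P) (hP₂ : IsSelfAdjoint P)
    (hQ₁ : IsIdempotentElem Q) (hQ₂ : IsSelfAdjoint Q) :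
    ∃ (d : ℕ) (p : Fin d → H),
      Orthonormal ℂ p ∧
      Submodule.span ℂ (Set.range p) = LinearMap.range (P : H →ₗ[ℂ] H) ∧
      (∀ i j : Fin d, i ≠ j → (inner ℂ (p i) (Q (p j)) : ℂ) = 0) :=
  stmt_8_general P Q hQ₂
end

section
/- If P and Q are any two orthogonal projections on a Hilbert space, then ‖(1 - P) Q P‖ ≤ 1/2. -/
private lemma norm_le_one_of_proj {H : Type*} [NormedAddCommGroup H] [InnerProductSpace ℂ H]
    [CompleteSpace H] (P : H →L[ℂ] H) (hP₁ : IsIdempotentElem P) (hP₂ : IsSelfAdjoint P) :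
    ‖P‖ ≤ 1 := by
  have h : ‖P‖ * ‖P‖ = ‖P‖ := by
    calc ‖P‖ * ‖P‖ = ‖star P * P‖ := CStarRing.norm_star_mul_self.symm
      _ = ‖P * P‖ := by rw [hP₂.star_eq]
      _ = ‖P‖ := by rw [hP₁.eq]
  nlinarith [norm_nonneg P]

/-- **A universal bound for two projections.**
If `P` and `Q` are orthogonal projections on a complex Hilbert space, then
`‖(1 - P) Q P‖ ≤ 1/2`. -/
theorem stmt_9 {H : Type*} [NormedAddCommGroup H] [InnerProductSpace ℂ H]
    [CompleteSpace H] (P Q : H →L[ℂ] H)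
    (hP₁ : IsIdempotentElem P) (hP₂ : IsSelfAdjoint P)
    (hQ₁ : IsIdempotentElem Q) (hQ₂ : IsSelfAdjoint Q) :
    ‖(1 - P) * Q * P‖ ≤ 1 / 2 := by
  have hone : ‖(1 : H →L[ℂ] H)‖ ≤ 1 := ContinuousLinearMap.norm_id_le
  have hsq : (Q - (1/2 : ℂ) • 1) * (Q - (1/2 : ℂ) • 1) = (1/4 : ℂ) • 1 := by
    simp only [mul_sub, sub_mul, smul_mul_assoc, mul_smul_comm, one_mul, mul_one, hQ₁.eq,
      smul_smul]
    module
  have hRsa : IsSelfAdjoint (Q - (1/2 : ℂ) • 1) := by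
    refine hQ₂.sub ?_
    rw [IsSelfAdjoint, star_smul, star_one]
    norm_num
  have hRnorm : ‖Q - (1/2 : ℂ) • 1‖ ≤ 1/2 := by
    have h : ‖Q - (1/2 : ℂ) • 1‖ * ‖Q - (1/2 : ℂ) • 1‖ ≤ 1/4 := by
      calc ‖Q - (1/2 : ℂ) • 1‖ * ‖Q - (1/2 : ℂ) • 1‖
          = ‖star (Q - (1/2 : ℂ) • 1) * (Q - (1/2 : ℂ) • 1)‖ := CStarRing.norm_star_mul_self.symm
        _ = ‖(Q - (1/2 : ℂ) • 1) * (Q - (1/2 : ℂ) • 1)‖ := by rw [hRsa.star_eq]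
        _ = ‖((1/4 : ℂ)) • (1 : H →L[ℂ] H)‖ := by rw [hsq]
        _ = (1/4) * ‖(1 : H →L[ℂ] H)‖ := by rw [norm_smul]; norm_num
        _ ≤ 1/4 := by nlinarith [norm_nonneg (1 : H →L[ℂ] H)]
    nlinarith [norm_nonneg (Q - (1/2 : ℂ) • (1 : H →L[ℂ] H))]
  have hPn : ‖P‖ ≤ 1 := norm_le_one_of_proj P hP₁ hP₂
  have hP1n : ‖(1 : H →L[ℂ] H) - P‖ ≤ 1 :=
    norm_le_one_of_proj _ hP₁.one_sub ((IsSelfAdjoint.one (H →L[ℂ] H)).sub hP₂)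
  have h0 : ((1 : H →L[ℂ] H) - P) * P = 0 := by
    simp [sub_mul, hP₁.eq]
  have key : (1 - P) * (Q - (1/2 : ℂ) • 1) * P = (1 - P) * Q * P := by
    rw [mul_sub, mul_smul_comm, mul_one, sub_mul, smul_mul_assoc, h0, smul_zero, sub_zero]
  rw [← key]
  calc ‖(1 - P) * (Q - (1/2 : ℂ) • 1) * P‖
      ≤ ‖(1 - P) * (Q - (1/2 : ℂ) • 1)‖ * ‖P‖ := norm_mul_le _ _
    _ ≤ ‖(1 : H →L[ℂ] H) - P‖ * ‖Q - (1/2 : ℂ) • 1‖ * ‖P‖ := by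
        gcongr
        exact norm_mul_le _ _
    _ ≤ 1 * (1/2) * 1 :=
        mul_le_mul (mul_le_mul hP1n hRnorm (norm_nonneg _) (by norm_num)) hPn
          (norm_nonneg _) (by norm_num)
    _ = 1/2 := by norm_num
end

section
/- Let A, B be self-adjoint n × n matrices, δ > 0, α ≤ β real, and suppose S₁ ⊂ [α, β] and S₂ ⊂ (-∞, α - δ] ∪ [β + δ, ∞). Then ‖E_{S₁}(A) E_{S₂}(B)‖ ≤ (1/δ)·‖A - B‖ (Davis–Kahan sin θ theorem, interval form). -/
/-- The ℓ²→ℓ² operator norm of a square complex matrix. -/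
noncomputable def opNorm {n : ℕ} (A : Matrix (Fin n) (Fin n) ℂ) : ℝ :=
  ‖Matrix.toEuclideanCLM (𝕜 := ℂ) A‖

open Classical in
/-- The spectral projection of a Hermitian matrix `D` onto a set `S ⊆ ℝ`. -/
noncomputable def spectralProj {n : ℕ} {D : Matrix (Fin n) (Fin n) ℂ}
    (hD : D.IsHermitian) (S : Set ℝ) : Matrix (Fin n) (Fin n) ℂ :=
  (hD.eigenvectorUnitary : Matrix (Fin n) (Fin n) ℂ) *
    (Matrix.diagonal fun i => if hD.eigenvalues i ∈ S then (1 : ℂ) else 0) *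
    star (hD.eigenvectorUnitary : Matrix (Fin n) (Fin n) ℂ)

/-!
Put `c = (α + β) / 2`, `r = (β - α) / 2`, `P = E_{S₁}(A)`, `Q = E_{S₂}(B)`. Since `P` commutes
with `A` and `Q` with `B`, `X = P Q` solves the Sylvester equation `M X - X N = P (A - B) Q` with
`M = P (A - c)` and `N = B - c`. Here `‖M‖ ≤ r`, while on the range of `Q` the spectrum of `B` is
at distance at least `r + δ` from `c`, so `N` has there a right inverse `G` with
`‖G‖ ≤ (r + δ)⁻¹`. From `X = X N G = (M X - P (A - B) Q) G` we get
`(r + δ) ‖X‖ ≤ r ‖X‖ + ‖P (A - B) Q‖`, that is `δ ‖X‖ ≤ ‖A - B‖`.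
-/

open scoped Matrix.Norms.L2Operator
open Set

theorem sub_mul_norm_le_norm_mul_sub_mul {R : Type*} [NonUnitalSeminormedRing R]
    {X M N G : R} {a b : ℝ} (hb : 0 < b) (hM : ‖M‖ ≤ a) (hG : ‖G‖ ≤ b⁻¹)
    (hX : X * N * G = X) : (b - a) * ‖X‖ ≤ ‖M * X - X * N‖ := by
  have hXN : ‖X * N‖ ≤ a * ‖X‖ + ‖M * X - X * N‖ :=
    calc ‖X * N‖ = ‖M * X - (M * X - X * N)‖ := by rw [sub_sub_cancel]
      _ ≤ ‖M * X‖ + ‖M * X - X * N‖ := norm_sub_le _ _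
      _ ≤ a * ‖X‖ + ‖M * X - X * N‖ := by
        gcongr; exact (norm_mul_le _ _).trans (by gcongr)
  have : ‖X‖ ≤ (a * ‖X‖ + ‖M * X - X * N‖) * b⁻¹ :=
    calc ‖X‖ = ‖X * N * G‖ := by rw [hX]
      _ ≤ ‖X * N‖ * ‖G‖ := norm_mul_le _ _
      _ ≤ (a * ‖X‖ + ‖M * X - X * N‖) * b⁻¹ :=
        mul_le_mul hXN hG (norm_nonneg _) ((norm_nonneg _).trans hXN)
  rw [le_mul_inv_iff₀ hb] at this
  linarith

theorem le_abs_sub_midpoint {x α β δ : ℝ} (hx : x ∈ Iic (α - δ) ∪ Ici (β + δ)) :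
    (β - α) / 2 + δ ≤ |x - (α + β) / 2| := by
  rcases hx with h | h <;> simp only [mem_Iic, mem_Ici] at h
  · exact le_abs.mpr (Or.inr (by linarith))
  · exact le_abs.mpr (Or.inl (by linarith))

section CStarAlgebra

variable {𝒜 : Type*} [CStarAlgebra 𝒜] {a : 𝒜}

theorem norm_cfc_indicator_one_le (S : Set ℝ) : ‖cfc (S.indicator 1) a‖ ≤ 1 :=
  norm_cfc_le zero_le_one fun x _ => by
    by_cases hx : x ∈ S <;> simp [hx]

theorem norm_cfc_indicator_mul_sub_le {S : Set ℝ} {c r : ℝ} (hr : 0 ≤ r)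
    (hS : S ⊆ Metric.closedBall c r) :
    ‖cfc (fun x => S.indicator 1 x * (x - c)) a‖ ≤ r :=
  norm_cfc_le hr fun x _ => by
    by_cases hx : x ∈ S
    · simpa [hx, ← Real.dist_eq] using hS hx
    · simpa [hx] using hr

theorem norm_cfc_indicator_inv_sub_le {S : Set ℝ} {c d : ℝ} (hd : 0 < d)
    (hS : ∀ x ∈ S, d ≤ |x - c|) :
    ‖cfc (S.indicator fun x => (x - c)⁻¹) a‖ ≤ d⁻¹ :=
  norm_cfc_le (inv_nonneg.mpr hd.le) fun x _ => by
    by_cases hx : x ∈ S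
    · simpa [hx] using inv_anti₀ hd (hS x hx)
    · simpa [hx] using hd.le

end CStarAlgebra

namespace Matrix.IsHermitian

section RCLike

variable {n 𝕜 : Type*} [Fintype n] [DecidableEq n] [RCLike 𝕜] {A : Matrix n n 𝕜}

theorem continuousOn_spectrum (hA : A.IsHermitian) (f : ℝ → ℝ) :
    ContinuousOn f (spectrum ℝ A) :=
  hA.spectrum_real_eq_range_eigenvalues ▸ (finite_range _).continuousOn f

theorem cfc_mul_cfc (hA : A.IsHermitian) (f g : ℝ → ℝ) :
    cfc f A * cfc g A = cfc (fun x => f x * g x) A :=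
  (cfc_mul f g A (hA.continuousOn_spectrum f) (hA.continuousOn_spectrum g)).symm

theorem cfc_sub_const (hA : A.IsHermitian) (c : ℝ) :
    cfc (fun x => x - c) A = A - algebraMap ℝ _ c := by
  rw [cfc_sub _ _ A (hA.continuousOn_spectrum _) (hA.continuousOn_spectrum _),
    cfc_id' ℝ A hA.isSelfAdjoint, cfc_const c A hA.isSelfAdjoint]

theorem cfc_indicator_mul_sub_mul_inv (hA : A.IsHermitian) {S : Set ℝ} {c : ℝ} (hc : c ∉ S) :
    cfc (S.indicator 1) A * cfc (fun x => x - c) A * cfc (S.indicator fun x => (x - c)⁻¹) A =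
      cfc (S.indicator 1) A := by
  rw [hA.cfc_mul_cfc, hA.cfc_mul_cfc]
  congr 1; ext x
  by_cases hx : x ∈ S
  · have : x - c ≠ 0 := sub_ne_zero.mpr fun h => hc (h ▸ hx)
    simp [hx, this]
  · simp [hx]

end RCLike

variable {n : Type*} [Fintype n] [DecidableEq n] {A B : Matrix n n ℂ}

theorem norm_cfc_indicator_mul_cfc_indicator_le (hA : A.IsHermitian) (hB : B.IsHermitian)
    {S₁ S₂ : Set ℝ} {δ α β : ℝ} (hδ : 0 < δ) (hαβ : α ≤ β) (hS₁ : S₁ ⊆ Icc α β)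
    (hS₂ : S₂ ⊆ Iic (α - δ) ∪ Ici (β + δ)) :
    δ * ‖cfc (S₁.indicator 1) A * cfc (S₂.indicator 1) B‖ ≤ ‖A - B‖ := by
  set c := (α + β) / 2
  set r := (β - α) / 2 with hr_def
  set P := cfc (S₁.indicator 1) A
  set Q := cfc (S₂.indicator 1) B
  have hball : S₁ ⊆ Metric.closedBall c r := fun x hx => by
    rw [Real.closedBall_eq_Icc]; convert hS₁ hx using 2 <;> ring
  have hgap : ∀ x ∈ S₂, r + δ ≤ |x - c| := fun x hx => le_abs_sub_midpoint (hS₂ hx)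
  have hc : c ∉ S₂ := fun hc => by
    have := hgap c hc
    rw [sub_self, abs_zero] at this
    linarith
  have hMP : cfc (fun x => S₁.indicator 1 x * (x - c)) A * P = P * cfc (fun x => x - c) A := by
    rw [hA.cfc_mul_cfc, hA.cfc_mul_cfc]
    congr 1; ext x; by_cases hx : x ∈ S₁ <;> simp [hx]
  have hNQ : cfc (fun x => x - c) B * Q = Q * cfc (fun x => x - c) B := cfc_commute_cfc _ _ B
  have hW : cfc (fun x => S₁.indicator 1 x * (x - c)) A * (P * Q) -
      P * Q * cfc (fun x => x - c) B = P * (A - B) * Q := by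
    rw [← mul_assoc, hMP, mul_assoc P Q, ← hNQ, hA.cfc_sub_const, hB.cfc_sub_const]
    simp only [mul_sub, sub_mul, mul_assoc]; abel
  have hX : P * Q * cfc (fun x => x - c) B * cfc (S₂.indicator fun x => (x - c)⁻¹) B = P * Q := by
    rw [mul_assoc P, mul_assoc P, hB.cfc_indicator_mul_sub_mul_inv hc]
  have hr : 0 ≤ r := by linarith
  have hM := norm_cfc_indicator_mul_sub_le (a := A) hr hball
  have hG := norm_cfc_indicator_inv_sub_le (a := B) (by positivity) hgap
  have key := sub_mul_norm_le_norm_mul_sub_mul (by positivity) hM hG hX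
  rw [hW, add_sub_cancel_left] at key
  calc δ * ‖P * Q‖ ≤ ‖P * (A - B) * Q‖ := key
    _ ≤ ‖P‖ * ‖A - B‖ * ‖Q‖ := norm_mul₃_le
    _ ≤ 1 * ‖A - B‖ * 1 := by
      gcongr
      · exact norm_cfc_indicator_one_le S₁
      · exact norm_cfc_indicator_one_le S₂
    _ = ‖A - B‖ := by ring

end Matrix.IsHermitian

theorem spectralProj_eq_cfc {n : ℕ} {D : Matrix (Fin n) (Fin n) ℂ} (hD : D.IsHermitian)
    (S : Set ℝ) : spectralProj hD S = cfc (S.indicator 1) D := by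
  classical
  rw [hD.cfc_eq, Matrix.IsHermitian.cfc, Unitary.conjStarAlgAut_apply, spectralProj]
  congr
  ext i
  by_cases h : hD.eigenvalues i ∈ S <;> simp [h]

theorem opNorm_eq_norm {n : ℕ} (A : Matrix (Fin n) (Fin n) ℂ) : opNorm A = ‖A‖ := rfl

/-- **Davis–Kahan `sin θ` theorem, interval form.**
If `A, B` are Hermitian, `S₁ ⊆ [α, β]` and `S₂ ⊆ (-∞, α - δ] ∪ [β + δ, ∞)` with `δ > 0`,
then `‖E_{S₁}(A) E_{S₂}(B)‖ ≤ (1/δ) * ‖A - B‖`. -/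
theorem stmt_10 {n : ℕ} (A B : Matrix (Fin n) (Fin n) ℂ)
    (hA : A.IsHermitian) (hB : B.IsHermitian)
    (S₁ S₂ : Set ℝ) (δ α β : ℝ) (hδ : 0 < δ) (hαβ : α ≤ β)
    (hS₁ : S₁ ⊆ Set.Icc α β)
    (hS₂ : S₂ ⊆ Set.Iic (α - δ) ∪ Set.Ici (β + δ)) :
    opNorm (spectralProj hA S₁ * spectralProj hB S₂) ≤ (1 / δ) * opNorm (A - B) := by
  have key := hA.norm_cfc_indicator_mul_cfc_indicator_le hB hδ hαβ hS₁ hS₂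
  rw [← spectralProj_eq_cfc, ← spectralProj_eq_cfc] at key
  rw [opNorm_eq_norm, opNorm_eq_norm, one_div, le_inv_mul_iff₀ hδ]
  exact key
end

section
/- Let E ≤ G be orthogonal projections on a Hilbert space and ε > 0. If F′ is an orthogonal projection with ‖E(1 - F′)‖ < ε and ‖F′(1 - G)‖ < ε, then there exists an orthogonal projection F with E ≤ F ≤ G and ‖F - F′‖ ≤ 5ε. -/
section DavidsonHelpers

variable {A : Type*} [CStarAlgebra A]

lemma davidson_proj_norm_le_one {p : A} (h1 : p * p = p) (h2 : star p = p) : ‖p‖ ≤ 1 := by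
  have h : ‖p‖ * ‖p‖ = ‖p‖ := by
    rw [← CStarRing.norm_star_mul_self, h2, h1]
  nlinarith [norm_nonneg p]

variable [PartialOrder A] [StarOrderedRing A]

/-- The difference of two orthogonal projections has norm at most `1`. -/
lemma davidson_proj_diff_norm_le_one {E F' : A}
    (hE₁ : E * E = E) (hE₂ : star E = E) (hF'₁ : F' * F' = F') (hF'₂ : star F' = F') :
    ‖E - F'‖ ≤ 1 := by
  set M : A := E - F' with hM
  have hMsa : star M = M := by simp [hM, star_sub, hE₂, hF'₂]
  have hsq : M ^ 2 = star M * M := by rw [hMsa, sq]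
  have h0 : (0 : A) ≤ M ^ 2 := hsq ▸ star_mul_self_nonneg M
  have hid : (1 : A) - M ^ 2 =
      star ((1 - F') * (1 - E)) * ((1 - F') * (1 - E)) + star (F' * E) * (F' * E) := by
    have mE : ∀ x : A, E * (E * x) = E * x := fun x => by rw [← mul_assoc, hE₁]
    have mF : ∀ x : A, F' * (F' * x) = F' * x := fun x => by rw [← mul_assoc, hF'₁]
    simp only [star_mul, star_sub, star_one, hE₂, hF'₂, hM]
    simp only [sq, mul_sub, sub_mul, mul_one, one_mul, mul_assoc, hE₁, hF'₁, mE, mF]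
    all_goals abel
  have h1 : M ^ 2 ≤ 1 := by
    rw [← sub_nonneg, hid]
    exact add_nonneg (star_mul_self_nonneg _) (star_mul_self_nonneg _)
  have hn : ‖M ^ 2‖ ≤ 1 := (CStarAlgebra.norm_le_one_iff_of_nonneg _ h0).mpr h1
  have he : ‖M‖ * ‖M‖ = ‖M ^ 2‖ := by rw [hsq, CStarRing.norm_star_mul_self]
  nlinarith [norm_nonneg M]

set_option maxHeartbeats 2000000 in
/-- The main construction for Davidson's lemma, in the regime `ε ≤ 1/5`. -/
theorem davidson_main {A : Type*} [CStarAlgebra A] [PartialOrder A] [StarOrderedRing A]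
    (E G F' : A)
    (hE₁ : IsIdempotentElem E) (hE₂ : IsSelfAdjoint E)
    (hG₁ : IsIdempotentElem G) (hG₂ : IsSelfAdjoint G)
    (hF'₁ : IsIdempotentElem F') (hF'₂ : IsSelfAdjoint F')
    (hEG : G * E = E) (ε : ℝ) (hε : 0 < ε) (hε5' : ε ≤ 1/5)
    (h₁ : ‖E * (1 - F')‖ < ε) (h₂ : ‖F' * (1 - G)‖ < ε) :
    ∃ F : A, IsIdempotentElem F ∧ IsSelfAdjoint F ∧
      F * E = E ∧ G * F = F ∧ ‖F - F'‖ ≤ 5 * ε := by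
  -- basic algebraic facts
  have hE : E * E = E := hE₁.eq
  have hG : G * G = G := hG₁.eq
  have hF : F' * F' = F' := hF'₁.eq
  have hEG' : E * G = E := by
    have := congrArg star hEG
    simpa [star_mul, hE₂.star_eq, hG₂.star_eq] using this
  have mE : ∀ x : A, E * (E * x) = E * x := fun x => by rw [← mul_assoc, hE]
  have mG : ∀ x : A, G * (G * x) = G * x := fun x => by rw [← mul_assoc, hG]
  have mF : ∀ x : A, F' * (F' * x) = F' * x := fun x => by rw [← mul_assoc, hF]
  have mGE : ∀ x : A, G * (E * x) = E * x := fun x => by rw [← mul_assoc, hEG]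
  have mEG : ∀ x : A, E * (G * x) = E * x := fun x => by rw [← mul_assoc, hEG']
  -- the auxiliary positive contraction `B`
  set B : A := E + (1 - E) * (G * F' * G) * (1 - E) with hBdef
  have hBsa : IsSelfAdjoint B := by
    rw [IsSelfAdjoint, hBdef]
    simp only [star_add, star_mul, star_sub, star_one, hE₂.star_eq, hG₂.star_eq, hF'₂.star_eq]
    simp only [sq, mul_sub, sub_mul, mul_one, one_mul, mul_assoc]
    all_goals abel
  have hBE : B * E = E := by
    rw [hBdef]
    simp only [sq, mul_sub, sub_mul, mul_one, one_mul, mul_assoc, hE, hG, hF, hEG, hEG',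
      mE, mG, mF, mGE, mEG, add_mul]
    all_goals abel
  have hGB : G * B = B := by
    rw [hBdef]
    simp only [sq, mul_sub, sub_mul, mul_one, one_mul, mul_assoc, hE, hG, hF, hEG, hEG',
      mE, mG, mF, mGE, mEG, mul_add]
    all_goals abel
  have h0B : (0 : A) ≤ B := by
    have hc : B = star E * E + star (F' * (G * (1 - E))) * (F' * (G * (1 - E))) := by
      simp only [star_mul, star_sub, star_one, hE₂.star_eq, hG₂.star_eq, hF'₂.star_eq, hBdef]
      simp only [sq, mul_sub, sub_mul, mul_one, one_mul, mul_assoc, hE, hG, hF, hEG, hEG',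
        mE, mG, mF, mGE, mEG]
      all_goals abel
    rw [hc]
    exact add_nonneg (star_mul_self_nonneg _) (star_mul_self_nonneg _)
  have hB1 : B ≤ 1 := by
    rw [← sub_nonneg]
    have hc : (1 : A) - B =
        star ((1 - G) * (1 - E)) * ((1 - G) * (1 - E)) +
          star ((1 - F') * (G * (1 - E))) * ((1 - F') * (G * (1 - E))) := by
      simp only [star_mul, star_sub, star_one, hE₂.star_eq, hG₂.star_eq, hF'₂.star_eq, hBdef]
      simp only [sq, mul_sub, sub_mul, mul_one, one_mul, mul_assoc, hE, hG, hF, hEG, hEG',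
        mE, mG, mF, mGE, mEG]
      all_goals abel
    rw [hc]
    exact add_nonneg (star_mul_self_nonneg _) (star_mul_self_nonneg _)
  -- norms of the projections involved
  have hnE1 : ‖(1 : A) - E‖ ≤ 1 :=
    davidson_proj_norm_le_one hE₁.one_sub.eq (by simp [star_sub, hE₂.star_eq])
  have hnG : ‖G‖ ≤ 1 := davidson_proj_norm_le_one hG hG₂.star_eq
  -- small quantities
  have hu' : ‖(1 - G) * F'‖ ≤ ε := by
    have h : (1 - G) * F' = star (F' * (1 - G)) := by
      simp [star_mul, star_sub, hG₂.star_eq, hF'₂.star_eq]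
    rw [h, norm_star]; exact h₂.le
  have hv' : ‖(1 - F') * E‖ ≤ ε := by
    have h : (1 - F') * E = star (E * (1 - F')) := by
      simp [star_mul, star_sub, hE₂.star_eq, hF'₂.star_eq]
    rw [h, norm_star]; exact h₁.le
  -- convenient norm-of-product helpers
  have mul_le₁ : ∀ {a b : A} {β : ℝ}, ‖a‖ ≤ 1 → ‖b‖ ≤ β → ‖a * b‖ ≤ β := by
    intro a b β ha hb
    exact (norm_mul_le a b).trans ((mul_le_of_le_one_left (norm_nonneg b) ha).trans hb)
  have mul_le₂ : ∀ {a b : A} {α : ℝ}, ‖a‖ ≤ α → ‖b‖ ≤ 1 → ‖a * b‖ ≤ α := by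
    intro a b α ha hb
    exact (norm_mul_le a b).trans ((mul_le_of_le_one_right (norm_nonneg a) hb).trans ha)
  have mul_le₃ : ∀ {a b : A} {α β : ℝ}, ‖a‖ ≤ α → ‖b‖ ≤ β → 0 ≤ β →
      ‖a * b‖ ≤ α * β := by
    intro a b α β ha hb hβ
    exact (norm_mul_le a b).trans
      (mul_le_mul ha hb (norm_nonneg b) ((norm_nonneg a).trans ha))
  -- the defect `δ = ‖B - B²‖ ≤ 2 ε²`
  have hδle : ‖B - B ^ 2‖ ≤ 2 * ε ^ 2 := by
    have hid : B - B ^ 2 =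
        ((1 - E) * (G * (F' * (1 - G)))) * (((1 - G) * F') * (G * (1 - E))) +
          ((1 - E) * (G * ((F' - 1) * E))) * ((E * ((F' - 1) * G)) * (1 - E)) := by
      rw [hBdef]
      simp only [sq, mul_sub, sub_mul, mul_one, one_mul, mul_assoc, hE, hG, hF, hEG, hEG',
        mE, mG, mF, mGE, mEG, add_mul, mul_add]
      all_goals abel
    have k1 : ‖(1 - E) * (G * (F' * (1 - G)))‖ ≤ ε := mul_le₁ hnE1 (mul_le₁ hnG h₂.le)
    have k2 : ‖((1 - G) * F') * (G * (1 - E))‖ ≤ ε := mul_le₂ hu' (mul_le₁ hnG hnE1)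
    have hFm : ‖(F' - 1) * E‖ ≤ ε := by
      have h : (F' - 1) * E = -((1 - F') * E) := by noncomm_ring
      rw [h, norm_neg]; exact hv'
    have hFm' : ‖E * ((F' - 1) * G)‖ ≤ ε := by
      have h : E * ((F' - 1) * G) = -((E * (1 - F')) * G) := by noncomm_ring
      rw [h, norm_neg]
      exact mul_le₂ h₁.le hnG
    have k3 : ‖(1 - E) * (G * ((F' - 1) * E))‖ ≤ ε := mul_le₁ hnE1 (mul_le₁ hnG hFm)
    have k4 : ‖(E * ((F' - 1) * G)) * (1 - E)‖ ≤ ε := mul_le₂ hFm' hnE1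
    calc ‖B - B ^ 2‖ ≤ ‖((1 - E) * (G * (F' * (1 - G)))) * (((1 - G) * F') * (G * (1 - E)))‖
          + ‖((1 - E) * (G * ((F' - 1) * E))) * ((E * ((F' - 1) * G)) * (1 - E))‖ := by
            rw [hid]; exact norm_add_le _ _
      _ ≤ ε * ε + ε * ε := by
            gcongr
            · exact mul_le₃ k1 k2 hε.le
            · exact mul_le₃ k3 k4 hε.le
      _ = 2 * ε ^ 2 := by ring
  set δ : ℝ := ‖B - B ^ 2‖ with hδdef
  have hδ0 : 0 ≤ δ := norm_nonneg _
  -- spectral facts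
  have hBB2sa : IsSelfAdjoint (B - B ^ 2) := hBsa.sub (hBsa.pow 2)
  have hspec : ∀ x ∈ spectrum ℝ B, 0 ≤ x ∧ x ≤ 1 ∧ x - x ^ 2 ≤ δ := by
    intro x hx
    refine ⟨spectrum_nonneg_of_nonneg h0B hx, ?_, ?_⟩
    · exact (CFC.le_one_iff (R := ℝ) B hBsa).mp hB1 x hx
    · have hcalc : cfc (fun t : ℝ => t - t ^ 2) B = B - B ^ 2 := by
        rw [cfc_sub (fun t : ℝ => t) (fun t : ℝ => t ^ 2) B (by fun_prop) (by fun_prop),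
          cfc_id' ℝ B hBsa, cfc_pow_id B 2 hBsa]
      have hmem : x - x ^ 2 ∈ spectrum ℝ (B - B ^ 2) := by
        rw [← hcalc, cfc_map_spectrum (fun t : ℝ => t - t ^ 2) B hBsa (by fun_prop)]
        exact ⟨x, hx, rfl⟩
      have hle : B - B ^ 2 ≤ algebraMap ℝ _ δ := IsSelfAdjoint.le_algebraMap_norm_self hBB2sa
      exact (le_algebraMap_iff_spectrum_le hBB2sa).mp hle _ hmem
  -- the cut function and friends
  set χ : ℝ → ℝ := fun t => min 1 (max 0 (10 * t - 5)) with hχdef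
  have hχc : Continuous χ := by
    apply continuous_const.min
    exact continuous_const.max (by fun_prop)
  set ψ : ℝ → ℝ := fun t => χ t * (max t 2⁻¹)⁻¹ with hψdef
  have hψc : Continuous ψ := by
    apply hχc.mul
    exact (continuous_id.max continuous_const).inv₀ fun x => by positivity
  set φ : ℝ → ℝ := fun t => (1 - χ t) * (max (1 - t) 2⁻¹)⁻¹ with hφdef
  have hφc : Continuous φ := by
    apply (continuous_const.sub hχc).mul
    exact ((continuous_const.sub continuous_id).max continuous_const).inv₀ fun x => by positivity
  -- key dichotomy on the spectrum
  have key : ∀ x ∈ spectrum ℝ B,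
      (0 ≤ x ∧ x ≤ 2 * δ ∧ χ x = 0) ∨ (1 - 2 * δ ≤ x ∧ x ≤ 1 ∧ χ x = 1) := by
    intro x hx
    obtain ⟨hx0, hx1, hxδ⟩ := hspec x hx
    rcases le_or_gt x (1/2) with h | h
    · left
      refine ⟨hx0, ?_, ?_⟩
      · nlinarith [mul_nonneg hx0 (by linarith : (0:ℝ) ≤ 1/2 - x)]
      · have h5 : 10 * x - 5 ≤ 0 := by linarith
        simp [hχdef, max_eq_left h5]
    · right
      have h2δ : 1 - x ≤ 2 * δ := by
        nlinarith [mul_nonneg (by linarith : (0:ℝ) ≤ x - 1/2) (by linarith : (0:ℝ) ≤ 1 - x)]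
      refine ⟨by linarith, hx1, ?_⟩
      have hδ4 : δ ≤ 2 * ε ^ 2 := hδle
      have h5' : (0:ℝ) ≤ 10 * x - 5 := by linarith
      have h5 : (1:ℝ) ≤ 10 * x - 5 := by nlinarith
      simp [hχdef, max_eq_right h5', min_eq_left h5]
  -- the projection `F`
  refine ⟨cfc χ B, ?_, cfc_predicate χ B, ?_, ?_, ?_⟩
  · -- idempotent
    show cfc χ B * cfc χ B = cfc χ B
    rw [← cfc_mul χ χ B hχc.continuousOn hχc.continuousOn]
    exact cfc_congr fun x hx => by
      rcases key x hx with ⟨-, -, h0⟩ | ⟨-, -, h1⟩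
      · simp [h0]
      · simp [h1]
  · -- F * E = E
    have h1BE : ((1 : A) - B) * E = 0 := by rw [sub_mul, hBE, one_mul, sub_self]
    have e1 : (1 : A) - cfc χ B = cfc (fun t => 1 - χ t) B := by
      rw [cfc_sub (fun _ : ℝ => (1:ℝ)) χ B (by fun_prop) hχc.continuousOn,
        cfc_const 1 B hBsa, map_one]
    have e2 : cfc (fun t => 1 - χ t) B = cfc (fun t => φ t * (1 - t)) B := by
      apply cfc_congr
      intro x hx
      rcases key x hx with ⟨hx0, hx2δ, h0⟩ | ⟨-, -, h1⟩
      · have hδ4 : δ ≤ 2 * ε ^ 2 := hδle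
        have hhalf : (2:ℝ)⁻¹ ≤ 1 - x := by nlinarith
        have hne : (1 : ℝ) - x ≠ 0 := by nlinarith
        simp only [hφdef, h0, sub_zero, max_eq_left hhalf, one_mul]
        field_simp
      · simp [hφdef, h1]
    have e3 : cfc (fun t => φ t * (1 - t)) B = cfc φ B * ((1:A) - B) := by
      rw [cfc_mul φ (fun t : ℝ => 1 - t) B hφc.continuousOn (by fun_prop)]
      congr 1
      rw [cfc_sub (fun _ : ℝ => (1:ℝ)) (fun t : ℝ => t) B (by fun_prop) (by fun_prop),
        cfc_const 1 B hBsa, map_one, cfc_id' ℝ B hBsa]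
    have e4 : ((1 : A) - cfc χ B) * E = 0 := by
      rw [e1, e2, e3, mul_assoc, h1BE, mul_zero]
    have e5 : E - cfc χ B * E = 0 := by
      rw [← e4, sub_mul, one_mul]
    have := sub_eq_zero.mp e5
    exact this.symm
  · -- G * F = F
    have f1 : cfc χ B = cfc (fun t => t * ψ t) B := by
      apply cfc_congr
      intro x hx
      rcases key x hx with ⟨-, -, h0⟩ | ⟨h84, hx1, h1⟩
      · simp [hψdef, h0]
      · have hδ4 : δ ≤ 2 * ε ^ 2 := hδle
        have hhalf : (2:ℝ)⁻¹ ≤ x := by nlinarith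
        have hne : x ≠ 0 := by nlinarith
        simp only [hψdef, h1, one_mul, max_eq_left hhalf]
        field_simp
    have f2 : cfc (fun t => t * ψ t) B = B * cfc ψ B := by
      rw [cfc_mul (fun t : ℝ => t) ψ B (by fun_prop) hψc.continuousOn, cfc_id' ℝ B hBsa]
    rw [f1, f2, ← mul_assoc, hGB]
  · -- the norm estimate
    have hFB : ‖cfc χ B - B‖ ≤ 2 * δ := by
      have h : cfc χ B - B = cfc (fun t => χ t - t) B := by
        rw [cfc_sub χ (fun t : ℝ => t) B hχc.continuousOn (by fun_prop), cfc_id' ℝ B hBsa]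
      rw [h]
      apply norm_cfc_le (by linarith)
      intro x hx
      rcases key x hx with ⟨hx0, hx2δ, h0⟩ | ⟨h84, hx1, h1⟩
      · rw [h0, Real.norm_eq_abs, abs_le]; constructor <;> linarith
      · rw [h1, Real.norm_eq_abs, abs_le]; constructor <;> linarith
    have h2ε : ‖G * F' * G - F'‖ ≤ 2 * ε := by
      have hid : G * F' * G - F' = -((G * (F' * (1 - G))) + (1 - G) * F') := by noncomm_ring
      rw [hid, norm_neg]
      calc ‖(G * (F' * (1 - G))) + (1 - G) * F'‖ ≤ ‖G * (F' * (1 - G))‖ + ‖(1 - G) * F'‖ :=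
            norm_add_le _ _
        _ ≤ ε + ε := add_le_add (mul_le₁ hnG h₂.le) hu'
        _ = 2 * ε := by ring
    have hBF' : ‖B - F'‖ ≤ 4 * ε := by
      have hid : B - F' = E * (1 - F') - (1 - E) * ((1 - F') * E) * (-1)
          + (1 - E) * ((G * F' * G - F') * (1 - E)) := by
        rw [hBdef]
        simp only [sq, mul_sub, sub_mul, mul_one, one_mul, mul_neg, neg_mul, mul_assoc,
          hE, hG, hF, hEG, hEG', mE, mG, mF, mGE, mEG]
        all_goals abel
      rw [hid]
      have n1 : ‖E * (1 - F')‖ ≤ ε := h₁.le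
      have n2 : ‖(1 - E) * ((1 - F') * E) * (-1)‖ ≤ ε := by
        rw [mul_neg_one, norm_neg]
        exact mul_le₁ hnE1 hv'
      have n3 : ‖(1 - E) * ((G * F' * G - F') * (1 - E))‖ ≤ 2 * ε :=
        mul_le₁ hnE1 (mul_le₂ h2ε hnE1)
      calc ‖E * (1 - F') - (1 - E) * ((1 - F') * E) * (-1)
            + (1 - E) * ((G * F' * G - F') * (1 - E))‖
          ≤ ‖E * (1 - F') - (1 - E) * ((1 - F') * E) * (-1)‖
            + ‖(1 - E) * ((G * F' * G - F') * (1 - E))‖ := norm_add_le _ _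
        _ ≤ (‖E * (1 - F')‖ + ‖(1 - E) * ((1 - F') * E) * (-1)‖)
            + ‖(1 - E) * ((G * F' * G - F') * (1 - E))‖ := by gcongr; exact norm_sub_le _ _
        _ ≤ (ε + ε) + 2 * ε := by gcongr
        _ = 4 * ε := by ring
    have hsplit : cfc χ B - F' = (cfc χ B - B) + (B - F') := by abel
    rw [hsplit]
    calc ‖(cfc χ B - B) + (B - F')‖ ≤ ‖cfc χ B - B‖ + ‖B - F'‖ := norm_add_le _ _
      _ ≤ 2 * δ + 4 * ε := add_le_add hFB hBF'
      _ ≤ 5 * ε := by nlinarith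

end DavidsonHelpers

/-- **Davidson's projection nesting lemma.**
Let `E ≤ G` be orthogonal projections on a Hilbert space (nesting expressed as `G E = E`)
and `ε > 0`. If `F'` is an orthogonal projection with `‖E (1 - F')‖ < ε` and
`‖F' (1 - G)‖ < ε`, then there is an orthogonal projection `F` with `E ≤ F ≤ G` and
`‖F - F'‖ ≤ 5ε`. -/
theorem stmt_11 {H : Type*} [NormedAddCommGroup H] [InnerProductSpace ℂ H]
    [FiniteDimensional ℂ H] (E G F' : H →L[ℂ] H)
    (hE₁ : IsIdempotentElem E) (hE₂ : IsSelfAdjoint E)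
    (hG₁ : IsIdempotentElem G) (hG₂ : IsSelfAdjoint G)
    (hF'₁ : IsIdempotentElem F') (hF'₂ : IsSelfAdjoint F')
    (hEG : G * E = E) (ε : ℝ) (hε : 0 < ε)
    (h₁ : ‖E * (1 - F')‖ < ε) (h₂ : ‖F' * (1 - G)‖ < ε) :
    ∃ F : H →L[ℂ] H, IsIdempotentElem F ∧ IsSelfAdjoint F ∧
      F * E = E ∧ G * F = F ∧ ‖F - F'‖ ≤ 5 * ε := by
  rcases le_or_gt (1/5 : ℝ) ε with hε5 | hε5
  · refine ⟨E, hE₁, hE₂, hE₁.eq, hEG, ?_⟩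
    have := davidson_proj_diff_norm_le_one hE₁.eq hE₂.star_eq hF'₁.eq hF'₂.star_eq
    linarith
  · exact davidson_main E G F' hE₁ hE₂ hG₁ hG₂ hF'₁ hF'₂ hEG ε hε hε5.le h₁ h₂
end

section
/- Let A ∈ Mₙ(ℂ) be self-adjoint with at most m distinct eigenvalues and let B ∈ Mₙ(ℂ). Then there exist commuting matrices A′, B′ ∈ Mₙ(ℂ) with A′ self-adjoint such that ‖A - A′‖ ≤ (m/√2)·‖[A,B]‖^{1/2} and ‖B - B′‖ ≤ (m/√2)·‖[A,B]‖^{1/2}. -/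
open Finset Matrix
open scoped InnerProductSpace Matrix.Norms.L2Operator

namespace NearbyCommuting

variable {α β : Type*}

lemma sum_sum_filter_le_card_mul {s : Finset α} {t : Finset β} (p : α → β → Prop)
    [∀ a b, Decidable (p a b)] {N : ℕ} (hN : ∀ a ∈ s, #{b ∈ t | p a b} ≤ N)
    (f : α → ℝ) (hf : ∀ a, 0 ≤ f a) :
    ∑ a ∈ s, ∑ b ∈ t with p a b, f a ≤ N * ∑ a ∈ s, f a := by
  rw [mul_sum]
  refine sum_le_sum fun a ha => ?_
  rw [sum_const, nsmul_eq_mul]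
  exact mul_le_mul_of_nonneg_right (by exact_mod_cast hN a ha) (hf a)

theorem sum_sum_mul_mul_le_of_card_support_le (s : Finset α) (t : Finset β)
    (w : α → β → ℝ) {γ : ℝ} (hγ : 0 ≤ γ) (hw : ∀ a ∈ s, ∀ b ∈ t, |w a b| ≤ γ) {N : ℕ}
    (hrow : ∀ a ∈ s, #{b ∈ t | w a b ≠ 0} ≤ N) (hcol : ∀ b ∈ t, #{a ∈ s | w a b ≠ 0} ≤ N)
    {u : α → ℝ} {v : β → ℝ} (hu : ∀ a, 0 ≤ u a) (hv : ∀ b, 0 ≤ v b) :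
    ∑ a ∈ s, ∑ b ∈ t, w a b * u a * v b
      ≤ N * γ * √(∑ a ∈ s, u a ^ 2) * √(∑ b ∈ t, v b ^ 2) := by
  set S := (s ×ˢ t).filter fun p => w p.1 p.2 ≠ 0
  have hS : ∀ g : α → β → ℝ, ∑ p ∈ S, g p.1 p.2 = ∑ a ∈ s, ∑ b ∈ t with w a b ≠ 0, g a b := by
    intro g
    simp only [S, sum_filter, sum_product]
  have hu2 : ∑ p ∈ S, u p.1 ^ 2 ≤ N * ∑ a ∈ s, u a ^ 2 := by
    rw [hS (fun a _ => u a ^ 2)]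
    exact sum_sum_filter_le_card_mul _ hrow _ fun a => sq_nonneg _
  have hv2 : ∑ p ∈ S, v p.2 ^ 2 ≤ N * ∑ b ∈ t, v b ^ 2 := by
    rw [hS (fun _ b => v b ^ 2), sum_comm' (t' := t) (s' := fun b => s.filter (w · b ≠ 0))]
    · exact sum_sum_filter_le_card_mul (fun b a => w a b ≠ 0) hcol _ fun b => sq_nonneg _
    · intro a b; simp only [mem_filter]; tauto
  calc ∑ a ∈ s, ∑ b ∈ t, w a b * u a * v b
      = ∑ p ∈ S, w p.1 p.2 * u p.1 * v p.2 := by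
        rw [hS (fun a b => w a b * u a * v b)]
        refine sum_congr rfl fun a _ => (sum_filter_of_ne fun b _ h => ?_).symm
        exact left_ne_zero_of_mul (left_ne_zero_of_mul h)
    _ ≤ ∑ p ∈ S, γ * (u p.1 * v p.2) := by
        refine sum_le_sum fun p hp => ?_
        obtain ⟨ha, hb⟩ := mem_product.1 (mem_filter.1 hp).1
        rw [mul_assoc]
        exact mul_le_mul_of_nonneg_right ((le_abs_self _).trans (hw _ ha _ hb))
          (mul_nonneg (hu _) (hv _))
    _ ≤ γ * (√(∑ p ∈ S, u p.1 ^ 2) * √(∑ p ∈ S, v p.2 ^ 2)) := by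
        rw [← mul_sum]
        exact mul_le_mul_of_nonneg_left (Real.sum_mul_le_sqrt_mul_sqrt _ _ _) hγ
    _ ≤ γ * (√(N * ∑ a ∈ s, u a ^ 2) * √(N * ∑ b ∈ t, v b ^ 2)) := by
        gcongr
    _ = N * γ * √(∑ a ∈ s, u a ^ 2) * √(∑ b ∈ t, v b ^ 2) := by
        rw [Real.sqrt_mul (Nat.cast_nonneg N), Real.sqrt_mul (Nat.cast_nonneg N)]
        have := Real.mul_self_sqrt (Nat.cast_nonneg (α := ℝ) N)
        linear_combination (γ * √(∑ a ∈ s, u a ^ 2) * √(∑ b ∈ t, v b ^ 2)) * this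

section Clustering

variable (V : Finset ℝ) (δ : ℝ)

/-- The clusters of `V` are the fibres of `gapStartsBelow V δ` on `V`. -/
noncomputable def gapStartsBelow (t : ℝ) : Finset ℝ :=
  {u ∈ V | u < t ∧ ∀ v ∈ V, u < v → u + δ ≤ v}

variable {V δ}

lemma gapStartsBelow_mono {t t' : ℝ} (h : t ≤ t') :
    gapStartsBelow V δ t ⊆ gapStartsBelow V δ t' :=
  monotone_filter_right _ fun _ _ hu => ⟨hu.1.trans_le h, hu.2⟩

lemma add_le_of_gapStartsBelow_ne {a b : ℝ} (hb : b ∈ V) (hab : a ≤ b)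
    (hne : gapStartsBelow V δ a ≠ gapStartsBelow V δ b) : a + δ ≤ b := by
  obtain ⟨u, hu, hua⟩ := exists_of_ssubset ((gapStartsBelow_mono hab).ssubset_of_ne hne)
  obtain ⟨huV, hub, hgap⟩ := mem_filter.1 hu
  have hau : a ≤ u := not_lt.1 fun h => hua (mem_filter.2 ⟨huV, h, hgap⟩)
  linarith [hgap b hb hub]

lemma sub_le_card_mul_of_gapStartsBelow_eq {b : ℝ} (hb : b ∈ V) {a : ℝ} (ha : a ∈ V)
    (hab : a ≤ b) (heq : gapStartsBelow V δ a = gapStartsBelow V δ b) :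
    b - a ≤ #{v ∈ V | a < v ∧ v ≤ b} * δ := by
  induction hk : #{v ∈ V | a < v ∧ v ≤ b} using Nat.strong_induction_on generalizing a with
  | _ k ih =>
  rcases hab.eq_or_lt with rfl | hlt
  · rw [← hk, filter_false_of_mem fun v _ h => (h.1.trans_le h.2).false]
    simp
  -- `a` is no gap start, since otherwise it would lie in `gapStartsBelow V δ b`
  obtain ⟨v, hvV, hav, hva⟩ : ∃ v ∈ V, a < v ∧ v < a + δ := by
    by_contra! hgap
    have : a ∈ gapStartsBelow V δ b := mem_filter.2 ⟨ha, hlt, hgap⟩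
    exact (lt_irrefl a) (mem_filter.1 (heq ▸ this)).2.1
  set w := min v b
  have hwV : w ∈ V := by rcases min_choice v b with h | h <;> simp only [w, h] <;> assumption
  have haw : a < w := lt_min hav hlt
  have hwb : w ≤ b := min_le_right v b
  have hwa : w < a + δ := (min_le_left v b).trans_lt hva
  have hweq : gapStartsBelow V δ w = gapStartsBelow V δ b :=
    (gapStartsBelow_mono hwb).antisymm (heq ▸ gapStartsBelow_mono haw.le)
  have hlt_k : #{v ∈ V | w < v ∧ v ≤ b} < k := by
    rw [← hk]
    refine card_lt_card ⟨monotone_filter_right _ fun x _ hx => ⟨haw.trans hx.1, hx.2⟩, ?_⟩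
    intro hsub
    exact (lt_irrefl w) (mem_filter.1 (hsub (mem_filter.2 ⟨hwV, haw, hwb⟩))).2.1
  have hrec := ih _ hlt_k hwV hwb hweq rfl
  have hk' : ((#{v ∈ V | w < v ∧ v ≤ b} : ℕ) : ℝ) + 1 ≤ k := by exact_mod_cast hlt_k
  have hδ : 0 < δ := by linarith
  nlinarith

theorem exists_cluster_center (V : Finset ℝ) {δ : ℝ} (hδ : 0 ≤ δ) :
    ∃ ρ : ℝ → ℝ, (∀ a ∈ V, |a - ρ a| ≤ ((#V : ℝ) - 1) * δ / 2) ∧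
      ∀ a ∈ V, ∀ b ∈ V, ρ a ≠ ρ b → δ ≤ |a - b| := by
  let cluster : Finset ℝ → Finset ℝ := fun S => {u ∈ V | gapStartsBelow V δ u = S}
  let mid : Finset ℝ → ℝ := fun S =>
    if h : (cluster S).Nonempty then ((cluster S).min' h + (cluster S).max' h) / 2 else 0
  refine ⟨mid ∘ gapStartsBelow V δ, fun t ht => ?_, fun a ha b hb hne => ?_⟩
  · set C := cluster (gapStartsBelow V δ t)
    have htC : t ∈ C := mem_filter.2 ⟨ht, rfl⟩
    have hC : C.Nonempty := ⟨t, htC⟩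
    have hlo := mem_filter.1 (C.min'_mem hC)
    have hhi := mem_filter.1 (C.max'_mem hC)
    have hdiam := sub_le_card_mul_of_gapStartsBelow_eq hhi.1 hlo.1
      (C.min'_le_max' hC) (hlo.2.trans hhi.2.symm)
    have hcard : #{v ∈ V | C.min' hC < v ∧ v ≤ C.max' hC} + 1 ≤ #V :=
      card_lt_card ⟨filter_subset _ _, fun h => lt_irrefl _ (mem_filter.1 (h hlo.1)).2.1⟩
    have hcard' : ((#{v ∈ V | C.min' hC < v ∧ v ≤ C.max' hC} : ℕ) : ℝ) ≤ #V - 1 := by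
      have : ((#{v ∈ V | C.min' hC < v ∧ v ≤ C.max' hC} : ℕ) : ℝ) + 1 ≤ #V := by
        exact_mod_cast hcard
      linarith
    have hmid : (mid ∘ gapStartsBelow V δ) t = (C.min' hC + C.max' hC) / 2 := dif_pos hC
    rw [hmid, abs_le]
    have := C.min'_le t htC
    have := C.le_max' t htC
    constructor <;> nlinarith
  · have hne' : gapStartsBelow V δ a ≠ gapStartsBelow V δ b := fun h => hne (congrArg mid h)
    rcases le_total a b with hab | hba
    · rw [abs_sub_comm, abs_of_nonneg (by linarith [add_le_of_gapStartsBelow_ne hb hab hne'])]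
      linarith [add_le_of_gapStartsBelow_ne hb hab hne']
    · have := add_le_of_gapStartsBelow_ne ha hba hne'.symm
      rw [abs_of_nonneg (by linarith)]
      linarith

end Clustering

theorem norm_sum_smul_mul_mul_le {E : Type*} [NormedAddCommGroup E] [InnerProductSpace ℂ E]
    [CompleteSpace E] (V : Finset α) (P : α → E →L[ℂ] E) (hP : ∀ a ∈ V, IsSelfAdjoint (P a))
    (hP_sq : ∀ x, ∑ a ∈ V, ‖P a x‖ ^ 2 = ‖x‖ ^ 2) (K : E →L[ℂ] E) (c : α → α → ℂ) {γ : ℝ}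
    (hγ : 0 ≤ γ) (hc : ∀ a ∈ V, ∀ b ∈ V, ‖c a b‖ ≤ γ) {N : ℕ}
    (hrow : ∀ a ∈ V, #{b ∈ V | c a b ≠ 0} ≤ N) (hcol : ∀ b ∈ V, #{a ∈ V | c a b ≠ 0} ≤ N) :
    ‖∑ a ∈ V, ∑ b ∈ V, c a b • (P a * K * P b)‖ ≤ N * γ * ‖K‖ := by
  set T := ∑ a ∈ V, ∑ b ∈ V, c a b • (P a * K * P b)
  refine T.opNorm_le_bound (by positivity) fun x => ?_
  set y := T x
  have hsqrt : ∀ z, √(∑ a ∈ V, ‖P a z‖ ^ 2) = ‖z‖ := fun z => by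
    rw [hP_sq, Real.sqrt_sq (norm_nonneg z)]
  have key : ‖y‖ ^ 2 ≤ N * γ * ‖K‖ * ‖x‖ * ‖y‖ :=
    calc ‖y‖ ^ 2 = RCLike.re ⟪y, T x⟫_ℂ := (inner_self_eq_norm_sq y).symm
      _ ≤ ‖⟪y, T x⟫_ℂ‖ := RCLike.re_le_norm _
      _ = ‖∑ a ∈ V, ∑ b ∈ V, c a b * ⟪P a y, K (P b x)⟫_ℂ‖ := by
          simp only [T, FunLike.coe_sum, Finset.sum_apply, FunLike.coe_smul, Pi.smul_apply,
            inner_sum, inner_smul_right]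
          congr 1
          exact sum_congr rfl fun a ha => sum_congr rfl fun b _ =>
            congrArg (c a b * ·) ((hP a ha).isSymmetric y _).symm
      _ ≤ ∑ a ∈ V, ∑ b ∈ V, ‖c a b‖ * ‖P a y‖ * ‖P b x‖ * ‖K‖ := by
          refine (norm_sum_le _ _).trans (sum_le_sum fun a _ => (norm_sum_le _ _).trans
            (sum_le_sum fun b _ => ?_))
          rw [norm_mul, mul_assoc, mul_assoc]
          gcongr
          calc ‖⟪P a y, K (P b x)⟫_ℂ‖ ≤ ‖P a y‖ * ‖K (P b x)‖ := norm_inner_le_norm _ _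
            _ ≤ ‖P a y‖ * (‖K‖ * ‖P b x‖) := by gcongr; exact K.le_opNorm _
            _ = _ := by ring
      _ = ‖K‖ * ∑ a ∈ V, ∑ b ∈ V, ‖c a b‖ * ‖P a y‖ * ‖P b x‖ := by
          rw [mul_comm ‖K‖]
          simp only [sum_mul]
      _ ≤ ‖K‖ * (N * γ * ‖y‖ * ‖x‖) := by
          gcongr
          rw [← hsqrt y, ← hsqrt x]
          exact sum_sum_mul_mul_le_of_card_support_le V V (fun a b => ‖c a b‖) hγ
            (by simpa using hc) (by simpa using hrow) (by simpa using hcol)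
            (fun _ => norm_nonneg _) (fun _ => norm_nonneg _)
      _ = N * γ * ‖K‖ * ‖x‖ * ‖y‖ := by ring
  have : 0 ≤ N * γ * ‖K‖ * ‖x‖ := by positivity
  nlinarith [norm_nonneg y]

section Matrix

variable {ι : Type*} [DecidableEq ι] [DecidableEq α]

def fiberProj (f : ι → α) (a : α) : Matrix ι ι ℂ :=
  diagonal fun i => if f i = a then 1 else 0

lemma fiberProj_isHermitian (f : ι → α) (a : α) : (fiberProj f a).IsHermitian :=
  isHermitian_diagonal_iff.2 fun i => by split_ifs <;> simp

variable [Fintype ι]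

lemma sum_norm_sq_toEuclideanCLM_fiberProj {f : ι → α} {V : Finset α}
    (hf : ∀ i, f i ∈ V) (x : EuclideanSpace ℂ ι) :
    ∑ a ∈ V, ‖toEuclideanCLM (𝕜 := ℂ) (fiberProj f a) x‖ ^ 2 = ‖x‖ ^ 2 := by
  simp only [EuclideanSpace.norm_sq_eq, ofLp_toEuclideanCLM, fiberProj, mulVec_diagonal,
    ite_mul, one_mul, zero_mul]
  rw [sum_comm]
  refine sum_congr rfl fun i _ => ?_
  rw [sum_eq_single_of_mem (f i) (hf i) fun b _ hb => by simp [Ne.symm hb]]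
  simp

lemma eq_sum_smul_fiberProj_mul_mul {f : ι → α} {V : Finset α}
    (hf : ∀ i, f i ∈ V) {M K : Matrix ι ι ℂ} {c : α → α → ℂ}
    (hM : ∀ i j, M i j = c (f i) (f j) * K i j) :
    M = ∑ a ∈ V, ∑ b ∈ V, c a b • (fiberProj f a * K * fiberProj f b) := by
  ext i j
  simp only [fiberProj, diagonal_mul, mul_diagonal, Matrix.sum_apply, Matrix.smul_apply,
    smul_eq_mul, hM, ite_mul, one_mul, zero_mul, mul_ite, mul_one, mul_zero]
  simp [hf]

theorem norm_le_of_apply_eq_mul (f : ι → α) (V : Finset α) (hf : ∀ i, f i ∈ V)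
    {M K : Matrix ι ι ℂ} (c : α → α → ℂ) (hM : ∀ i j, M i j = c (f i) (f j) * K i j) {γ : ℝ}
    (hγ : 0 ≤ γ) (hc : ∀ a ∈ V, ∀ b ∈ V, ‖c a b‖ ≤ γ) {N : ℕ}
    (hrow : ∀ a ∈ V, #{b ∈ V | c a b ≠ 0} ≤ N) (hcol : ∀ b ∈ V, #{a ∈ V | c a b ≠ 0} ≤ N) :
    ‖M‖ ≤ N * γ * ‖K‖ := by
  rw [← l2_opNorm_toEuclideanCLM, ← l2_opNorm_toEuclideanCLM K, eq_sum_smul_fiberProj_mul_mul hf hM]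
  simp only [map_sum, map_smul, map_mul]
  exact norm_sum_smul_mul_mul_le V _ (fun a _ => (fiberProj_isHermitian f a).isSelfAdjoint.map _)
    (sum_norm_sq_toEuclideanCLM_fiberProj hf) _ c hγ hc hrow hcol

variable [DecidableEq β]

def blockPart (g : ι → β) (B : Matrix ι ι ℂ) : Matrix ι ι ℂ :=
  of fun i j => if g i = g j then B i j else 0

lemma diagonal_comp_mul_blockPart (φ : β → ℂ) (g : ι → β) (B : Matrix ι ι ℂ) :
    diagonal (φ ∘ g) * blockPart g B = blockPart g B * diagonal (φ ∘ g) := by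
  ext i j
  simp only [blockPart, diagonal_mul, mul_diagonal, of_apply, Function.comp_apply]
  split_ifs with h
  · rw [h, mul_comm]
  · simp

lemma norm_sub_blockPart_le {V : Finset ℝ} {d : ι → ℝ} (hd : ∀ i, d i ∈ V) {ρ : ℝ → β}
    {δ : ℝ} (hδ : 0 < δ) (hgap : ∀ a ∈ V, ∀ b ∈ V, ρ a ≠ ρ b → δ ≤ |a - b|)
    (B : Matrix ι ι ℂ) :
    ‖B - blockPart (ρ ∘ d) B‖ ≤
      #V * δ⁻¹ * ‖diagonal (fun i => (d i : ℂ)) * B - B * diagonal (fun i => (d i : ℂ))‖ := by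
  -- off the diagonal blocks, `B i j` is recovered from the commutator by dividing by `d i - d j`
  let c : ℝ → ℝ → ℂ := fun a b => if ρ a = ρ b then 0 else (((a - b : ℝ)) : ℂ)⁻¹
  refine norm_le_of_apply_eq_mul d V hd c (fun i j => ?_) (inv_nonneg.2 hδ.le)
    (fun a ha b hb => ?_) (fun a _ => card_filter_le _ _) (fun b _ => card_filter_le _ _)
  · simp only [blockPart, c, Matrix.sub_apply, of_apply, diagonal_mul, mul_diagonal,
      Function.comp_apply]
    split_ifs with h
    · simp
    · have hne : ((d i - d j : ℝ) : ℂ) ≠ 0 :=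
        Complex.ofReal_ne_zero.2 (sub_ne_zero.2 fun h' => h (by rw [h']))
      rw [sub_zero, mul_comm (B i j), ← sub_mul, ← Complex.ofReal_sub, inv_mul_cancel_left₀ hne]
  · simp only [c]
    split_ifs with h
    · simpa using hδ.le
    · rw [norm_inv, Complex.norm_real, Real.norm_eq_abs]
      exact inv_anti₀ hδ (hgap a ha b hb h)

lemma norm_diagonal_ofReal_sub_le {d e : ι → ℝ} {r : ℝ} (hr : 0 ≤ r)
    (h : ∀ i, |d i - e i| ≤ r) :
    ‖diagonal (fun i => (d i : ℂ)) - diagonal (fun i => (e i : ℂ))‖ ≤ r := by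
  rw [diagonal_sub, l2_opNorm_diagonal, pi_norm_le_iff_of_nonneg hr]
  intro i
  rw [← Complex.ofReal_sub, Complex.norm_real, Real.norm_eq_abs]
  exact h i

lemma card_image_eigenvalues {𝕜 : Type*} [RCLike 𝕜] {A : Matrix ι ι 𝕜} (hA : A.IsHermitian) :
    #(univ.image hA.eigenvalues) = (spectrum 𝕜 A).ncard := by
  rw [hA.spectrum_eq_image_range, Set.ncard_image_of_injective _ RCLike.ofReal_injective,
    ← Set.image_univ, ← coe_univ, ← coe_image, Set.ncard_coe_finset]

end Matrix

section Unitary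

variable {S R : Type*} [NormedRing R] [StarRing R] [CStarRing R] [SMul S R]
  [IsScalarTower S R R] [SMulCommClass S R R]

lemma norm_conjStarAlgAut (U : unitary R) (x : R) :
    ‖Unitary.conjStarAlgAut S R U x‖ = ‖x‖ := by
  rw [Unitary.conjStarAlgAut_apply, ← Unitary.coe_star, CStarRing.norm_mul_coe_unitary,
    CStarRing.norm_coe_unitary_mul]

lemma norm_conjStarAlgAut_symm (U : unitary R) (x : R) :
    ‖(Unitary.conjStarAlgAut S R U).symm x‖ = ‖x‖ := by
  rw [← norm_conjStarAlgAut (S := S) U, StarAlgEquiv.apply_symm_apply]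

end Unitary

lemma sqrt_two_mul_div_two (k : ℝ) : √(2 * k) / 2 = √k / √2 := by
  rw [Real.sqrt_mul zero_le_two, div_eq_div_iff two_ne_zero (by positivity)]
  linear_combination √k * Real.mul_self_sqrt zero_le_two

lemma inv_sqrt_two_mul_mul {k : ℝ} (hk : 0 < k) : (√(2 * k))⁻¹ * k = √k / √2 := by
  have hk' : 0 < √k := Real.sqrt_pos.2 hk
  rw [Real.sqrt_mul zero_le_two, inv_mul_eq_div, div_eq_div_iff (by positivity) (by positivity)]
  linear_combination (-√2) * Real.sq_sqrt hk.le

theorem exists_commuting_near_diagonal {ι : Type*} [Fintype ι] [DecidableEq ι] (d : ι → ℝ)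
    (B : Matrix ι ι ℂ) {m : ℕ} (hm : #(univ.image d) ≤ m) :
    ∃ A' B' : Matrix ι ι ℂ, A'.IsHermitian ∧ A' * B' = B' * A' ∧
      ‖diagonal (fun i => (d i : ℂ)) - A'‖ ≤
        m / √2 * √‖diagonal (fun i => (d i : ℂ)) * B - B * diagonal (fun i => (d i : ℂ))‖ ∧
      ‖B - B'‖ ≤
        m / √2 * √‖diagonal (fun i => (d i : ℂ)) * B - B * diagonal (fun i => (d i : ℂ))‖ := by
  set D := diagonal (fun i => (d i : ℂ))
  have hD : D.IsHermitian := isHermitian_diagonal_iff.2 fun i => Complex.conj_ofReal _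
  rcases (norm_nonneg (D * B - B * D)).eq_or_lt with hK | hK
  · exact ⟨D, B, hD, sub_eq_zero.1 (norm_eq_zero.1 hK.symm), by simp [← hK], by simp [← hK]⟩
  set V := univ.image d
  have hV : (#V : ℝ) ≤ m := by exact_mod_cast hm
  have hdV : ∀ i, d i ∈ V := fun i => mem_image_of_mem _ (mem_univ i)
  set δ := √(2 * ‖D * B - B * D‖)
  have hδ : 0 < δ := Real.sqrt_pos.2 (by positivity)
  obtain ⟨ρ, hρ_near, hρ_gap⟩ := exists_cluster_center V hδ.le
  refine ⟨diagonal (((↑) : ℝ → ℂ) ∘ ρ ∘ d), blockPart (ρ ∘ d) B,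
    isHermitian_diagonal_iff.2 fun i => Complex.conj_ofReal _,
    diagonal_comp_mul_blockPart _ _ _, ?_, ?_⟩
  · calc ‖D - diagonal (((↑) : ℝ → ℂ) ∘ ρ ∘ d)‖ ≤ m * δ / 2 :=
          norm_diagonal_ofReal_sub_le (by positivity) fun i =>
            (hρ_near _ (hdV i)).trans (by gcongr; linarith)
      _ = m / √2 * √‖D * B - B * D‖ := by rw [mul_div_assoc, sqrt_two_mul_div_two]; ring
  · calc ‖B - blockPart (ρ ∘ d) B‖ ≤ #V * (δ⁻¹ * ‖D * B - B * D‖) := by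
          rw [← mul_assoc]; exact norm_sub_blockPart_le hdV hδ hρ_gap B
      _ ≤ m / √2 * √‖D * B - B * D‖ := by
          rw [inv_sqrt_two_mul_mul hK, mul_div_assoc', div_mul_eq_mul_div]
          gcongr

end NearbyCommuting

open NearbyCommuting

/-- **Nearby commuting matrices when `A` has few eigenvalues.**
If `A ∈ Mₙ(ℂ)` is Hermitian with at most `m` distinct eigenvalues and `B ∈ Mₙ(ℂ)`, then
there are commuting `A', B'` with `A'` Hermitian,
`‖A - A'‖ ≤ (m/√2) ‖[A,B]‖^{1/2}` and `‖B - B'‖ ≤ (m/√2) ‖[A,B]‖^{1/2}`. -/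
theorem stmt_12 {n : ℕ} (m : ℕ) (A B : Matrix (Fin n) (Fin n) ℂ)
    (hA : A.IsHermitian) (hspec : (spectrum ℂ A).ncard ≤ m) :
    ∃ A' B' : Matrix (Fin n) (Fin n) ℂ,
      A'.IsHermitian ∧ A' * B' = B' * A' ∧
      opNorm (A - A') ≤ (m / Real.sqrt 2) * Real.sqrt (opNorm (A * B - B * A)) ∧
      opNorm (B - B') ≤ (m / Real.sqrt 2) * Real.sqrt (opNorm (A * B - B * A)) := by
  set Φ := Unitary.conjStarAlgAut ℂ _ hA.eigenvectorUnitary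
  set D : Matrix (Fin n) (Fin n) ℂ := diagonal (RCLike.ofReal ∘ hA.eigenvalues)
  have hAD : A = Φ D := hA.spectral_theorem
  obtain ⟨A', B', hA', hcomm, hA'_near, hB'_near⟩ := exists_commuting_near_diagonal
    hA.eigenvalues (Φ.symm B) (m := m) (by rwa [card_image_eigenvalues hA])
  have hK : ‖D * Φ.symm B - Φ.symm B * D‖ = ‖A * B - B * A‖ := by
    rw [(Φ.symm_apply_eq.2 hAD).symm, ← map_mul, ← map_mul, ← map_sub, norm_conjStarAlgAut_symm]
  refine ⟨Φ A', Φ B', hA'.isSelfAdjoint.map Φ, by rw [← map_mul, ← map_mul, hcomm], ?_, ?_⟩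
  · change ‖A - Φ A'‖ ≤ m / √2 * √‖A * B - B * A‖
    rw [← hK, hAD, ← map_sub, norm_conjStarAlgAut]
    exact hA'_near
  · change ‖B - Φ B'‖ ≤ m / √2 * √‖A * B - B * A‖
    rw [← norm_conjStarAlgAut_symm (S := ℂ) hA.eigenvectorUnitary, map_sub,
      StarAlgEquiv.symm_apply_apply, ← hK]
    exact hB'_near
end
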